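/- arXiv:2509.08801 — 2 statements merged into one kernel-verified Lean document; each statement's English description precedes it below -/
import Mathlib

section
/- Let P*(n) be defined by ∑_{n≥0} P*(n) q^n = ∏_{i≥1}(1-q^i)^4 (1-q^{5i})^4. Then for all n ≥ 0, P*(4n+3) ≡ 0 (mod 8). -/
open PowerSeries

/-- `f k` is the formal power series `∏_{i≥1} (1 - q^{k i})` over `ℤ`:
its `n`-th coefficient is the `n`-th coefficient of the partial product
`∏_{i=1}^{n+1} (1 - q^{k i})`, which stabilizes. -/
noncomputable def f (k : ℕ) : PowerSeries ℤ :=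
  PowerSeries.mk fun n =>
    PowerSeries.coeff n
      (∏ i ∈ Finset.range (n + 1), (1 - (PowerSeries.X : PowerSeries ℤ) ^ (k * (i + 1))))

/-- The multiplicative inverse `1 / f k` (the constant coefficient of `f k` is `1`). -/
noncomputable def finv (k : ℕ) : PowerSeries ℤ := PowerSeries.invOfUnit (f k) 1

/-!
Modulo 8 we have `(1 - y)⁴ = (1 - y²)² + 4 (y + y³)`, and since `4² = 0` a product of such factors
is `∏ (1 - yᵢ²)² + 4 ∑ⱼ (yⱼ + yⱼ³) ∏_{i ≠ j} (1 - yᵢ²)²`. For `yᵢ = q^{eᵢ}` the first term only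
has even powers of `q`, so an odd coefficient is 4 times a coefficient of the second sum, which
only matters modulo 2. Modulo 2, `(y + y³) / (1 - y⁴) = y / (1 - y²) = ∑ₜ y^{2t+1}`, so that sum is
`∏ (1 - q^{4eᵢ})` times `∑ⱼ ∑ₜ q^{eⱼ (2t+1)}`; the first factor lives in degrees divisible by 4, and
the `q^c` coefficient of the second counts the pairs `(j, t)` with `eⱼ (2t+1) = c`. For the
exponents `k (i+1)` with `k ≡ 1 (mod 4)` and `c ≡ 3 (mod 4)`, exchanging the divisors `i+1` and
`2t+1` is an involution on these pairs without fixed points, since a fixed point would give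
`c = k u² ≡ 1 (mod 4)`. The infinite products enter only through their truncations, which agree
with them modulo `q^N`.
-/

open Finset

section Algebra

variable {ι A : Type*} [DecidableEq ι]

theorem Finset.prod_add_mul_eq_of_sq_eq_zero [CommSemiring A] {c : A} (hc : c ^ 2 = 0)
    (s : Finset ι) (a b : ι → A) :
    ∏ i ∈ s, (a i + c * b i) = ∏ i ∈ s, a i + c * ∑ j ∈ s, b j * ∏ i ∈ s.erase j, a i := by
  induction s using Finset.induction_on with
  | empty => simp
  | @insert x s hx ih =>
    have hsum : ∑ j ∈ s, b j * ∏ i ∈ (insert x s).erase j, a i =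
        a x * ∑ j ∈ s, b j * ∏ i ∈ s.erase j, a i := by
      rw [mul_sum]
      refine sum_congr rfl fun j hj ↦ ?_
      rw [erase_insert_of_ne (ne_of_mem_of_not_mem hj hx).symm,
        prod_insert (fun h ↦ hx (mem_of_mem_erase h)), mul_left_comm]
    rw [prod_insert hx, prod_insert hx, ih, sum_insert hx, erase_insert hx, hsum]
    calc _ = a x * ∏ i ∈ s, a i + c * (b x * ∏ i ∈ s, a i +
          a x * ∑ j ∈ s, b j * ∏ i ∈ s.erase j, a i) +
          c ^ 2 * (b x * ∑ j ∈ s, b j * ∏ i ∈ s.erase j, a i) := by ring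
      _ = _ := by rw [hc, zero_mul, add_zero]

variable [CommRing A]

theorem one_sub_pow_four_eq (h8 : (8 : A) = 0) (y : A) :
    (1 - y) ^ 4 = (1 - y ^ 2) ^ 2 + 4 * (y + y ^ 3) := by
  linear_combination (y ^ 2 - y - y ^ 3) * h8

noncomputable def fourthPowerCorrection (s : Finset ι) (y : ι → A) : A :=
  ∑ j ∈ s, (y j + y j ^ 3) * ∏ i ∈ s.erase j, (1 - y i ^ 2) ^ 2

theorem prod_one_sub_pow_four (h8 : (8 : A) = 0) (s : Finset ι) (y : ι → A) :
    ∏ i ∈ s, (1 - y i) ^ 4 = (∏ i ∈ s, (1 - y i ^ 2)) ^ 2 + 4 * fourthPowerCorrection s y := by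
  have h16 : (4 : A) ^ 2 = 0 := by linear_combination 2 * h8
  simp_rw [one_sub_pow_four_eq h8]
  rw [prod_add_mul_eq_of_sq_eq_zero h16, prod_pow, fourthPowerCorrection]

theorem map_fourthPowerCorrection {B : Type*} [CommRing B] (φ : A →+* B) (s : Finset ι)
    (y : ι → A) : φ (fourthPowerCorrection s y) = fourthPowerCorrection s (φ ∘ y) := by
  simp [fourthPowerCorrection]

theorem fourthPowerCorrection_smodEq (h2 : (2 : A) = 0) {I : Ideal A} {s : Finset ι} {y : ι → A}
    {T : ℕ} (hy : ∀ j ∈ s, y j ^ (2 * T) ∈ I) :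
    fourthPowerCorrection s y ≡
      (∏ i ∈ s, (1 - y i ^ 4)) * ∑ j ∈ s, ∑ t ∈ range T, y j ^ (2 * t + 1) [SMOD I] := by
  rw [fourthPowerCorrection, mul_sum]
  refine SModEq.sum fun j hj ↦ ?_
  have hsq : ∀ z : A, (1 - z ^ 2) ^ 2 = 1 - z ^ 4 := fun z ↦ by
    linear_combination (z ^ 4 - z ^ 2) * h2
  have hgeom : (1 - y j ^ 4) * ∑ t ∈ range T, y j ^ (2 * t + 1) =
      (y j + y j ^ 3) * (1 - y j ^ (2 * T)) := by
    have hodd : ∑ t ∈ range T, y j ^ (2 * t + 1) = y j * ∑ t ∈ range T, (y j ^ 2) ^ t := by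
      rw [mul_sum]
      exact sum_congr rfl fun t _ ↦ by ring
    rw [hodd]
    linear_combination (y j + y j ^ 3) * mul_neg_geom_sum (y j ^ 2) T
  rw [SModEq.sub_mem, ← mul_prod_erase s _ hj, mul_right_comm, hgeom]
  simp_rw [hsq]
  convert I.mul_mem_left ((y j + y j ^ 3) * ∏ i ∈ s.erase j, (1 - y i ^ 4)) (hy j hj) using 1
  ring

end Algebra

namespace PowerSeries

variable {ι R : Type*} [CommRing R]

theorem coeff_eq_of_smodEq {N j : ℕ} {a b : R⟦X⟧} (h : a ≡ b [SMOD Ideal.span {(X : R⟦X⟧) ^ N}])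
    (hj : j < N) : coeff j a = coeff j b := by
  rw [SModEq.sub_mem, Ideal.mem_span_singleton, X_pow_dvd_iff] at h
  exact sub_eq_zero.mp (by simpa using h j hj)

theorem prod_range_one_sub_X_pow_smodEq {k M N : ℕ} (hk : k ≠ 0) (hMN : M ≤ N) :
    ∏ i ∈ range N, (1 - (X : R⟦X⟧) ^ (k * (i + 1))) ≡
      ∏ i ∈ range M, (1 - (X : R⟦X⟧) ^ (k * (i + 1))) [SMOD Ideal.span {(X : R⟦X⟧) ^ M}] := by
  have hX : ∀ i ∈ Ico M N, (X : R⟦X⟧) ^ (k * (i + 1)) ≡ 0 [SMOD Ideal.span {(X : R⟦X⟧) ^ M}] := by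
    intro i hi
    rw [SModEq.zero, Ideal.mem_span_singleton]
    exact pow_dvd_pow X (by have := (mem_Ico.mp hi).1; nlinarith [Nat.one_le_iff_ne_zero.mpr hk])
  have hIco : ∏ i ∈ Ico M N, (1 - (X : R⟦X⟧) ^ (k * (i + 1))) ≡ 1
      [SMOD Ideal.span {(X : R⟦X⟧) ^ M}] := by
    simpa using SModEq.prod fun i hi ↦ SModEq.sub (SModEq.refl 1) (hX i hi)
  rw [← prod_range_mul_prod_Ico _ hMN]
  simpa using SModEq.mul SModEq.rfl hIco

theorem expand_prod_one_sub_X_pow (p : ℕ) (hp : p ≠ 0) (s : Finset ι) (e : ι → ℕ) :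
    expand p hp (∏ i ∈ s, (1 - (X : R⟦X⟧) ^ e i)) = ∏ i ∈ s, (1 - (X : R⟦X⟧) ^ (p * e i)) := by
  simp [map_prod, pow_mul]

theorem coeff_expand_mul_eq_zero {p : ℕ} (hp : p ≠ 0) (φ : R⟦X⟧) {ψ : R⟦X⟧} {n : ℕ}
    (hψ : ∀ m ≤ n, m ≡ n [MOD p] → coeff m ψ = 0) : coeff n (expand p hp φ * ψ) = 0 := by
  rw [coeff_mul]
  refine sum_eq_zero fun ⟨a, m⟩ ham ↦ ?_
  rw [HasAntidiagonal.mem_antidiagonal] at ham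
  by_cases hpa : p ∣ a
  · have hm : a + m ≡ 0 + m [MOD p] := (Nat.modEq_zero_iff_dvd.mpr hpa).add_right m
    rw [zero_add, ham] at hm
    rw [hψ m (by omega) hm.symm, mul_zero]
  · rw [coeff_expand_of_not_dvd p hp φ hpa, zero_mul]

theorem coeff_sum_sum_X_pow_odd (s : Finset ι) (e : ι → ℕ) (T n : ℕ) :
    coeff n (∑ j ∈ s, ∑ t ∈ range T, ((X : R⟦X⟧) ^ e j) ^ (2 * t + 1)) =
      #{q ∈ s ×ˢ range T | e q.1 * (2 * q.2 + 1) = n} := by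
  simp_rw [← pow_mul, map_sum, coeff_X_pow, ← sum_product', sum_boole, eq_comm]

end PowerSeries

theorem f_smodEq_prod_range {k : ℕ} (hk : k ≠ 0) (N : ℕ) :
    f k ≡ ∏ i ∈ range N, (1 - (X : ℤ⟦X⟧) ^ (k * (i + 1))) [SMOD Ideal.span {(X : ℤ⟦X⟧) ^ N}] := by
  rw [SModEq.sub_mem, Ideal.mem_span_singleton, X_pow_dvd_iff]
  intro j hj
  rw [map_sub, sub_eq_zero, f, coeff_mk]
  exact (coeff_eq_of_smodEq (prod_range_one_sub_X_pow_smodEq (R := ℤ) hk hj) j.lt_succ_self).symm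

theorem coeff_fourthPowerCorrection_X_pow_eq_zero {ι : Type*} [DecidableEq ι] {s : Finset ι}
    {e : ι → ℕ} (he : ∀ i ∈ s, e i ≠ 0) {b : ℕ}
    (hcount : ∀ c ≤ b, c ≡ b [MOD 4] →
      Even #{q ∈ s ×ˢ range (b + 1) | e q.1 * (2 * q.2 + 1) = c}) :
    coeff b (fourthPowerCorrection s fun i ↦ (X : (ZMod 2)⟦X⟧) ^ e i) = 0 := by
  have h2 : (2 : (ZMod 2)⟦X⟧) = 0 := by
    rw [← map_ofNat C 2, show (2 : ZMod 2) = 0 from rfl, map_zero]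
  have hy : ∀ j ∈ s, ((X : (ZMod 2)⟦X⟧) ^ e j) ^ (2 * (b + 1)) ∈
      Ideal.span {(X : (ZMod 2)⟦X⟧) ^ (b + 1)} := fun j hj ↦ by
    rw [Ideal.mem_span_singleton, ← pow_mul]
    exact pow_dvd_pow X (by nlinarith [Nat.one_le_iff_ne_zero.mpr (he j hj)])
  rw [coeff_eq_of_smodEq (fourthPowerCorrection_smodEq h2 hy) b.lt_succ_self]
  simp_rw [← pow_mul _ _ 4, mul_comm _ 4]
  rw [← expand_prod_one_sub_X_pow 4 four_ne_zero]
  refine coeff_expand_mul_eq_zero _ _ fun c hcb hc ↦ ?_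
  rw [coeff_sum_sum_X_pow_odd, ZMod.natCast_eq_zero_iff_even]
  exact hcount c hcb hc

theorem eight_dvd_coeff_prod_one_sub_X_pow_pow_four {ι : Type*} [DecidableEq ι] {s : Finset ι}
    {e : ι → ℕ} (he : ∀ i ∈ s, e i ≠ 0) {b : ℕ} (hb : Odd b)
    (hcount : ∀ c ≤ b, c ≡ b [MOD 4] →
      Even #{q ∈ s ×ˢ range (b + 1) | e q.1 * (2 * q.2 + 1) = c}) :
    (8 : ℤ) ∣ coeff b (∏ i ∈ s, (1 - (X : ℤ⟦X⟧) ^ e i) ^ 4) := by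
  have h8 : (8 : (ZMod 8)⟦X⟧) = 0 := by
    rw [← map_ofNat C 8, show (8 : ZMod 8) = 0 from rfl, map_zero]
  have hsquares : coeff b ((∏ i ∈ s, (1 - ((X : (ZMod 8)⟦X⟧) ^ e i) ^ 2)) ^ 2) = 0 := by
    simp_rw [← pow_mul, mul_comm _ 2]
    rw [← expand_prod_one_sub_X_pow 2 two_ne_zero, ← map_pow]
    exact coeff_expand_of_not_dvd _ _ _ fun h ↦ by have := Nat.odd_iff.mp hb; omega
  have hcorr : ZMod.castHom (by norm_num : 2 ∣ 8) (ZMod 2)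
      (coeff b (fourthPowerCorrection s fun i ↦ (X : (ZMod 8)⟦X⟧) ^ e i)) = 0 := by
    rw [← coeff_map, map_fourthPowerCorrection]
    simpa [Function.comp_def] using coeff_fourthPowerCorrection_X_pow_eq_zero he hcount
  refine (ZMod.intCast_zmod_eq_zero_iff_dvd _ 8).mp ?_
  rw [← eq_intCast (Int.castRingHom (ZMod 8)), ← coeff_map]
  simp only [map_prod, map_pow, map_sub, map_one, map_X]
  rw [prod_one_sub_pow_four h8, map_add, hsquares, zero_add, ← map_ofNat C 4, coeff_C_mul]
  have four_mul_eq_zero : ∀ x : ZMod 8, ZMod.castHom (by norm_num : 2 ∣ 8) (ZMod 2) x = 0 →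
      4 * x = 0 := by decide
  exact four_mul_eq_zero _ hcorr

theorem even_card_mul_succ_mul_odd_eq {K : Finset ℕ} (hK : ∀ k ∈ K, k % 4 = 1) {c N : ℕ}
    (hc : c % 4 = 3) (hcN : c < N) :
    Even #{q ∈ (K ×ˢ range N) ×ˢ range N | q.1.1 * (q.1.2 + 1) * (2 * q.2 + 1) = c} := by
  have hmem : ∀ k i t, ((k, i), t) ∈ ({q ∈ (K ×ˢ range N) ×ˢ range N |
      q.1.1 * (q.1.2 + 1) * (2 * q.2 + 1) = c} : Finset _) →
      k ∈ K ∧ Even i ∧ 2 * t < N ∧ i < N ∧ k * (i + 1) * (2 * t + 1) = c := by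
    intro k i t hq
    simp only [mem_filter, mem_product, mem_range] at hq
    obtain ⟨⟨⟨hk, hi⟩, -⟩, hkit⟩ := hq
    have hodd : Odd (k * (i + 1) * (2 * t + 1)) := hkit ▸ Nat.odd_iff.mpr (by omega)
    have ht : 2 * t + 1 ≤ c := hkit ▸ Nat.le_mul_of_pos_left _ (Nat.pos_of_ne_zero
      (by rintro h; rw [h, zero_mul] at hkit; omega))
    refine ⟨hk, ?_, by omega, hi, hkit⟩
    have := (Nat.odd_mul.mp (Nat.odd_mul.mp hodd).1).2
    rwa [Nat.odd_add_one, Nat.not_odd_iff_even] at this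
  rw [← ZMod.natCast_eq_zero_iff_even, card_eq_sum_ones, Nat.cast_sum, Nat.cast_one]
  refine sum_involution (fun q _ ↦ ((q.1.1, 2 * q.2), q.1.2 / 2)) (fun _ _ ↦ by decide) ?_ ?_ ?_
  · rintro ⟨⟨k, i⟩, t⟩ hq - hfix
    obtain ⟨hk, -, -, -, hkit⟩ := hmem k i t hq
    have hi : 2 * t = i := congrArg (·.1.2) hfix
    have : c = 4 * (k * (t * t + t)) + k := by rw [← hkit, ← hi]; ring
    have := hK k hk
    omega
  · rintro ⟨⟨k, i⟩, t⟩ hq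
    obtain ⟨hk, ⟨m, rfl⟩, ht, hi, hkit⟩ := hmem k i t hq
    simp only [mem_filter, mem_product, mem_range]
    refine ⟨⟨⟨hk, ht⟩, by omega⟩, ?_⟩
    rw [← hkit, show 2 * ((m + m) / 2) = m + m by omega]
    ring
  · rintro ⟨⟨k, i⟩, t⟩ hq
    obtain ⟨-, ⟨m, rfl⟩, -⟩ := hmem k i t hq
    simp only [Prod.mk.injEq, true_and]
    omega

theorem eight_dvd_coeff_prod_f_pow_four {K : Finset ℕ} (hK : ∀ k ∈ K, k % 4 = 1) (n : ℕ) :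
    (8 : ℤ) ∣ coeff (4 * n + 3) (∏ k ∈ K, f k ^ 4) := by
  set b := 4 * n + 3
  have hK0 : ∀ k ∈ K, k ≠ 0 := fun k hk ↦ by have := hK k hk; omega
  have htrunc : ∏ k ∈ K, f k ^ 4 ≡ ∏ q ∈ K ×ˢ range (b + 1), (1 - X ^ (q.1 * (q.2 + 1))) ^ 4
      [SMOD Ideal.span {(X : ℤ⟦X⟧) ^ (b + 1)}] := by
    rw [prod_product]
    refine SModEq.prod fun k hk ↦ ?_
    rw [prod_pow]
    exact (f_smodEq_prod_range (hK0 k hk) _).pow 4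
  rw [coeff_eq_of_smodEq htrunc b.lt_succ_self]
  refine eight_dvd_coeff_prod_one_sub_X_pow_pow_four (fun q hq ↦ ?_) (Nat.odd_iff.mpr (by omega))
    fun c hcb hc ↦ even_card_mul_succ_mul_odd_eq hK (by unfold Nat.ModEq at hc; omega) (by omega)
  exact mul_ne_zero (hK0 _ (mem_product.mp hq).1) (Nat.succ_ne_zero _)

theorem stmt1 : ∀ n : ℕ, (8 : ℤ) ∣ PowerSeries.coeff (4 * n + 3) (f 1 ^ 4 * f 5 ^ 4) := by
  intro n
  simpa [prod_pair] using eight_dvd_coeff_prod_f_pow_four (K := {1, 5}) (by decide) n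
end

section
/- Let T*(n) be defined by ∑_{n≥0} T*(n) q^n = f_1^5 f_{10}^5 / (f_2 f_5), and M(n) by ∑_{n≥0} M(n) q^n = f_2^5 f_5^5 / (f_1 f_{10}). Then for all n ≥ 0, T*(5n+3) = 5·M(n). -/
open PowerSeries

/-!
Gauss's and Jacobi's identities say that `f₁² / f₂ = ∑_{k ∈ ℤ} (-1)^k q^(k²)` and
`f₁³ = ∑_{k ∈ ℤ} (-1)^k k q^(k(k+1)/2)`. Both follow from the finite Jacobi triple product:
for `a b = Q`, the coefficient of `z^m` in `∏_{i<N} (1 - Q^i a z) (z - Q^i b)` is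
`(-1)^(N+m) [2N, m]_Q` times a monomial in `Q, a, b`; evaluate at `z = 1` (Gauss, `Q = q²`,
`a = b = q`) or differentiate at `z = 1` (Jacobi, `Q = a = q`, `b = 1`), and let `N → ∞` using
`(Q; Q)_N [2N, m]_Q ≡ 1` to high order.

So `D := f₁⁵ / f₂` is the product of the two theta series. Squares are `0, 1, 4` and
triangular numbers `0, 1, 3` modulo `5`, so an exponent `≡ 3 (mod 5)` of `D` only arises as
`25u + (25v + 3)`, and then `∑_t D(5t+3) q^t = 5 D(q^5)`. With `W := f₂⁵ / f₁` the two sides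
of the theorem are the coefficients of `q^(5n+3)` in `D(q) W(q⁵)` and of `q^n` in
`5 W(q) D(q⁵)`.
-/

open Finset

noncomputable section

variable {R : Type*} [CommRing R]

section Truncation

theorem smodEq_X_pow_iff {r : ℕ} {a b : R⟦X⟧} :
    a ≡ b [SMOD Ideal.span {(X : R⟦X⟧) ^ r}] ↔ ∀ i < r, coeff i a = coeff i b := by
  simp [SModEq.sub_mem, Ideal.mem_span_singleton, X_pow_dvd_iff, sub_eq_zero]

theorem eq_of_forall_smodEq_X_pow {a b : R⟦X⟧}
    (h : ∀ r, a ≡ b [SMOD Ideal.span {(X : R⟦X⟧) ^ r}]) : a = b :=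
  ext fun i => smodEq_X_pow_iff.mp (h (i + 1)) i i.lt_succ_self

theorem SModEq.mono_X_pow {r s : ℕ} {a b : R⟦X⟧} (hrs : r ≤ s)
    (h : a ≡ b [SMOD Ideal.span {(X : R⟦X⟧) ^ s}]) :
    a ≡ b [SMOD Ideal.span {(X : R⟦X⟧) ^ r}] :=
  h.mono (Ideal.span_singleton_le_span_singleton.mpr (pow_dvd_pow X hrs))

theorem SModEq.X_pow_mul {r : ℕ} {a b : R⟦X⟧} (e : ℕ)
    (h : a ≡ b [SMOD Ideal.span {(X : R⟦X⟧) ^ r}]) :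
    X ^ e * a ≡ X ^ e * b [SMOD Ideal.span {(X : R⟦X⟧) ^ (e + r)}] := by
  rw [SModEq.sub_mem, Ideal.mem_span_singleton] at h ⊢
  rw [← mul_sub, pow_add]
  exact mul_dvd_mul_left _ h

theorem SModEq.expand {r : ℕ} {a b : R⟦X⟧} (p : ℕ) (hp : p ≠ 0)
    (h : a ≡ b [SMOD Ideal.span {(X : R⟦X⟧) ^ r}]) :
    expand p hp a ≡ expand p hp b [SMOD Ideal.span {(X : R⟦X⟧) ^ (p * r)}] := by
  rw [SModEq.sub_mem, Ideal.mem_span_singleton] at h ⊢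
  obtain ⟨c, hc⟩ := h
  exact ⟨PowerSeries.expand p hp c,
    by rw [← map_sub, hc, map_mul, map_pow, expand_X, ← pow_mul]⟩

theorem one_sub_X_pow_mul_smodEq {r t : ℕ} (a : R⟦X⟧) (hrt : r ≤ t) :
    (1 - X ^ t) * a ≡ a [SMOD Ideal.span {(X : R⟦X⟧) ^ r}] := by
  rw [SModEq.sub_mem, Ideal.mem_span_singleton, show (1 - X ^ t) * a - a = -(X ^ t * a) by ring]
  exact ((pow_dvd_pow X hrt).mul_right a).neg_right

end Truncation

section QPochhammer

variable {A : Type*} [CommRing A]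

/-- The `q`-Pochhammer symbol `(Q; Q)_m`. -/
def qPochhammer (Q : A) (m : ℕ) : A := ∏ i ∈ range m, (1 - Q ^ (i + 1))

@[simp] theorem qPochhammer_zero (Q : A) : qPochhammer Q 0 = 1 := rfl

theorem qPochhammer_succ (Q : A) (m : ℕ) :
    qPochhammer Q (m + 1) = qPochhammer Q m * (1 - Q ^ (m + 1)) :=
  prod_range_succ _ _

theorem isUnit_qPochhammer {Q : R⟦X⟧} (hQ : constantCoeff Q = 0) (m : ℕ) :
    IsUnit (qPochhammer Q m) := by
  simp [isUnit_iff_constantCoeff, qPochhammer, hQ]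

theorem qPochhammer_X_pow_smodEq {k r m₀ m : ℕ} (hr : r ≤ k * (m₀ + 1)) (hm : m₀ ≤ m) :
    qPochhammer ((X : R⟦X⟧) ^ k) m ≡ qPochhammer (X ^ k) m₀
      [SMOD Ideal.span {(X : R⟦X⟧) ^ r}] := by
  induction m, hm using Nat.le_induction with
  | base => rfl
  | succ m hm ih =>
    refine SModEq.trans ?_ ih
    rw [qPochhammer_succ, mul_comm, ← pow_mul]
    exact one_sub_X_pow_mul_smodEq _ (hr.trans (Nat.mul_le_mul_left k (by omega)))

theorem qPochhammer_X_two_mul (N : ℕ) :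
    qPochhammer (X : R⟦X⟧) (2 * N) =
      qPochhammer (X ^ 2) N * ∏ i ∈ range N, (1 - (X ^ 2) ^ i * X) := by
  induction N with
  | zero => simp
  | succ N ih =>
    rw [show 2 * (N + 1) = 2 * N + 1 + 1 by ring, qPochhammer_succ, qPochhammer_succ, ih,
      qPochhammer_succ, prod_range_succ]
    ring

end QPochhammer

section EulerProduct

theorem coeff_f (k n : ℕ) :
    coeff n (f k) = coeff n (qPochhammer ((X : ℤ⟦X⟧) ^ k) (n + 1)) := by
  simp [f, qPochhammer, ← pow_mul]

theorem f_smodEq_qPochhammer {k r m : ℕ} (hk : 0 < k) (hr : r ≤ k * (m + 1)) :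
    f k ≡ qPochhammer (X ^ k) m [SMOD Ideal.span {(X : ℤ⟦X⟧) ^ r}] := by
  refine smodEq_X_pow_iff.mpr fun i hi => ?_
  rw [coeff_f]
  rcases le_total m (i + 1) with h | h
  · exact smodEq_X_pow_iff.mp (qPochhammer_X_pow_smodEq (r := i + 1) (by omega) h) i (by omega)
  · exact (smodEq_X_pow_iff.mp
      (qPochhammer_X_pow_smodEq (r := i + 1) (by nlinarith) h) i (by omega)).symm

theorem f_mul_finv {k : ℕ} (hk : 0 < k) : f k * finv k = 1 := by
  refine mul_invOfUnit _ _ ?_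
  simpa using
    smodEq_X_pow_iff.mp (f_smodEq_qPochhammer (r := 1) (m := 0) hk (by omega)) 0 one_pos

theorem expand_f {k : ℕ} (hk : 0 < k) (p : ℕ) (hp : p ≠ 0) :
    expand p hp (f k) = f (p * k) := by
  have hp' : 1 ≤ p := Nat.one_le_iff_ne_zero.mpr hp
  refine eq_of_forall_smodEq_X_pow fun r => ?_
  have hexp : expand p hp (qPochhammer ((X : ℤ⟦X⟧) ^ k) r) = qPochhammer (X ^ (p * k)) r := by
    simp [qPochhammer, map_prod, pow_mul]
  calc expand p hp (f k)
      ≡ qPochhammer (X ^ (p * k)) r [SMOD Ideal.span {(X : ℤ⟦X⟧) ^ r}] :=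
        hexp ▸ ((f_smodEq_qPochhammer hk (by nlinarith)).expand p hp).mono_X_pow (by nlinarith)
    _ ≡ f (p * k) [SMOD Ideal.span {(X : ℤ⟦X⟧) ^ r}] :=
        (f_smodEq_qPochhammer (by positivity) (by nlinarith [Nat.mul_le_mul hp' hk])).symm

theorem expand_finv {k : ℕ} (hk : 0 < k) (p : ℕ) (hp : p ≠ 0) :
    expand p hp (finv k) = finv (p * k) :=
  left_inv_eq_right_inv
    (by rw [mul_comm, ← expand_f hk p hp, ← map_mul, f_mul_finv hk, map_one])
    (f_mul_finv (by positivity))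

end EulerProduct

section GaussBinom

variable {A : Type*} [CommRing A]

/-- The Gaussian binomial coefficient `[n, k]_Q`. -/
def gaussBinom (Q : A) : ℕ → ℕ → A
  | _, 0 => 1
  | 0, _ + 1 => 0
  | n + 1, k + 1 => gaussBinom Q n (k + 1) + Q ^ (n - k) * gaussBinom Q n k

@[simp] theorem gaussBinom_zero_right (Q : A) (n : ℕ) : gaussBinom Q n 0 = 1 := by
  cases n <;> rfl

theorem gaussBinom_succ_succ (Q : A) (n k : ℕ) :
    gaussBinom Q (n + 1) (k + 1) = gaussBinom Q n (k + 1) + Q ^ (n - k) * gaussBinom Q n k :=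
  rfl

theorem gaussBinom_eq_zero_of_lt (Q : A) {n k : ℕ} (h : n < k) : gaussBinom Q n k = 0 := by
  induction n generalizing k with
  | zero => obtain ⟨k, rfl⟩ := Nat.exists_eq_add_of_lt h; rfl
  | succ n ih =>
    obtain ⟨k, rfl⟩ := Nat.exists_eq_add_of_lt (Nat.zero_lt_of_lt h)
    rw [gaussBinom_succ_succ, ih (by omega), ih (by omega), mul_zero, add_zero]

@[simp] theorem gaussBinom_self (Q : A) (n : ℕ) : gaussBinom Q n n = 1 := by
  induction n with
  | zero => rfl
  | succ n ih => simp [gaussBinom_succ_succ, gaussBinom_eq_zero_of_lt, ih]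

theorem gaussBinom_mul_qPochhammer (Q : A) {n k : ℕ} (hk : k ≤ n) :
    gaussBinom Q n k * (qPochhammer Q k * qPochhammer Q (n - k)) = qPochhammer Q n := by
  induction n generalizing k with
  | zero =>
    obtain rfl : k = 0 := by omega
    simp
  | succ n ih =>
    rcases k with _ | j
    · simp
    rcases Nat.lt_or_eq_of_le hk with hj | hj
    · obtain ⟨d, rfl⟩ : ∃ d, n = j + 1 + d := ⟨n - (j + 1), by omega⟩
      have h1 := ih (k := j + 1) (by omega)
      have h2 := ih (k := j) (by omega)
      rw [show j + 1 + d - (j + 1) = d by omega] at h1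
      rw [show j + 1 + d - j = d + 1 by omega, qPochhammer_succ Q d] at h2
      rw [gaussBinom_succ_succ, show j + 1 + d + 1 - (j + 1) = d + 1 by omega,
        show j + 1 + d - j = d + 1 by omega, qPochhammer_succ Q d,
        qPochhammer_succ Q (j + 1 + d)]
      linear_combination (1 - Q ^ (d + 1)) * h1 + Q ^ (d + 1) * (1 - Q ^ (j + 1)) * h2 +
        Q ^ (d + 1) * gaussBinom Q (j + 1 + d) j * qPochhammer Q d * (1 - Q ^ (d + 1)) *
          qPochhammer_succ Q j
    · obtain rfl : j = n := by omega
      simp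

theorem gaussBinom_succ_succ' {Q : R⟦X⟧} (hQ : constantCoeff Q = 0) (n k : ℕ) :
    gaussBinom Q (n + 1) (k + 1) = Q ^ (k + 1) * gaussBinom Q n (k + 1) + gaussBinom Q n k := by
  rcases lt_trichotomy n k with h | rfl | h
  · simp [gaussBinom_eq_zero_of_lt Q h, gaussBinom_eq_zero_of_lt Q (Nat.succ_lt_succ h),
      gaussBinom_eq_zero_of_lt Q (h.trans k.lt_succ_self)]
  · simp [gaussBinom_eq_zero_of_lt Q n.lt_succ_self]
  obtain ⟨d, rfl⟩ : ∃ d, n = k + 1 + d := ⟨n - (k + 1), by omega⟩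
  refine ((isUnit_qPochhammer hQ (k + 1)).mul (isUnit_qPochhammer hQ (d + 1))).mul_right_cancel ?_
  have h0 := gaussBinom_mul_qPochhammer Q (n := k + 1 + d + 1) (k := k + 1) (by omega)
  have h1 := gaussBinom_mul_qPochhammer Q (n := k + 1 + d) (k := k + 1) (by omega)
  have h2 := gaussBinom_mul_qPochhammer Q (n := k + 1 + d) (k := k) (by omega)
  rw [show k + 1 + d + 1 - (k + 1) = d + 1 by omega] at h0
  rw [show k + 1 + d - (k + 1) = d by omega] at h1
  rw [show k + 1 + d - k = d + 1 by omega] at h2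
  rw [h0, qPochhammer_succ Q (k + 1 + d), qPochhammer_succ Q d, qPochhammer_succ Q k]
  rw [qPochhammer_succ Q d] at h2
  rw [qPochhammer_succ Q k] at h1
  linear_combination (-(Q ^ (k + 1) * (1 - Q ^ (d + 1)))) * h1 - (1 - Q ^ (k + 1)) * h2

theorem gaussBinom_add_two_add_two {Q : R⟦X⟧} (hQ : constantCoeff Q = 0) {n m : ℕ}
    (hm : m ≤ n) :
    gaussBinom Q (n + 2) (m + 2) = Q ^ (m + 2) * gaussBinom Q n (m + 2) +
      (1 + Q ^ (n + 1)) * gaussBinom Q n (m + 1) + Q ^ (n - m) * gaussBinom Q n m := by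
  rw [gaussBinom_succ_succ' hQ (n + 1) (m + 1), gaussBinom_succ_succ Q n (m + 1),
    gaussBinom_succ_succ Q n m]
  rcases Nat.lt_or_eq_of_le hm with h | rfl
  · obtain ⟨d, rfl⟩ := Nat.exists_eq_add_of_lt h
    rw [show m + d + 1 - (m + 1) = d by omega, show m + d + 1 - m = d + 1 by omega]
    ring
  · simp [gaussBinom_eq_zero_of_lt Q (Nat.lt_succ_self m)]

theorem gaussBinom_add_two_one {Q : R⟦X⟧} (hQ : constantCoeff Q = 0) (n : ℕ) :
    gaussBinom Q (n + 2) 1 = Q * gaussBinom Q n 1 + (1 + Q ^ (n + 1)) := by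
  rw [gaussBinom_succ_succ' hQ (n + 1) 0, gaussBinom_succ_succ Q n 0]
  simp only [zero_add, pow_one, tsub_zero, gaussBinom_zero_right, mul_one]
  ring

end GaussBinom

section JacobiTripleProduct

variable {A : Type*} [CommRing A]

theorem choose_two_succ (d : ℕ) : (d + 1).choose 2 = d + d.choose 2 := by
  simp [Nat.choose_succ_succ']

theorem two_mul_choose_two_add_self (d : ℕ) : 2 * d.choose 2 + d = d ^ 2 := by
  induction d with
  | zero => rfl
  | succ d ih => rw [choose_two_succ]; nlinarith [ih]

/-- The finite Jacobi triple product `∏_{i<N} (1 - Q^i a z) (z - Q^i b)`, a polynomial in `z`. -/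
def jtpPoly (Q a b : A) (N : ℕ) : Polynomial A :=
  ∏ i ∈ range N,
    (1 - Polynomial.C (Q ^ i * a) * Polynomial.X) * (Polynomial.X - Polynomial.C (Q ^ i * b))

/-- The monomial in the coefficient of `z^m` of `jtpPoly Q a b N` (see `coeff_jtpPoly`). -/
def jtpWeight (Q a b : A) (N m : ℕ) : A :=
  if N ≤ m then Q ^ (m - N).choose 2 * a ^ (m - N) else Q ^ (N - m).choose 2 * b ^ (N - m)

variable {Q a b : A}

theorem jtpWeight_add_left (N d : ℕ) : jtpWeight Q a b N (N + d) = Q ^ d.choose 2 * a ^ d := by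
  simp [jtpWeight]

theorem jtpWeight_add_right (m d : ℕ) : jtpWeight Q a b (m + d) m = Q ^ d.choose 2 * b ^ d := by
  rcases d with _ | d
  · simp [jtpWeight]
  · simp [jtpWeight, show ¬ m + (d + 1) ≤ m by omega]

theorem jtpWeight_succ_succ (N m : ℕ) :
    jtpWeight Q a b (N + 1) (m + 1) = jtpWeight Q a b N m := by
  simp [jtpWeight]

theorem pow_mul_b_mul_jtpWeight (hab : a * b = Q) (N m : ℕ) :
    Q ^ N * b * jtpWeight Q a b N m = Q ^ m * jtpWeight Q a b (N + 1) m := by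
  rcases le_or_gt N m with h | h
  · obtain ⟨d, rfl⟩ := Nat.exists_eq_add_of_le h
    rcases d with _ | d
    · simp [jtpWeight]
    · rw [jtpWeight_add_left, show N + (d + 1) = N + 1 + d by ring, jtpWeight_add_left,
        choose_two_succ]
      linear_combination Q ^ (N + d + d.choose 2) * a ^ d * hab
  · obtain ⟨t, rfl⟩ := Nat.exists_eq_add_of_le h.le
    rw [jtpWeight_add_right, add_assoc, jtpWeight_add_right, choose_two_succ]
    ring

theorem pow_mul_a_mul_jtpWeight (hab : a * b = Q) {N m : ℕ} (hm : m ≤ 2 * N) :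
    Q ^ N * a * jtpWeight Q a b N m = Q ^ (2 * N - m) * jtpWeight Q a b (N + 1) (m + 2) := by
  rcases le_or_gt N m with h | h
  · obtain ⟨d, rfl⟩ := Nat.exists_eq_add_of_le h
    obtain ⟨e, rfl⟩ : ∃ e, N = d + e := ⟨N - d, by omega⟩
    rw [jtpWeight_add_left, show d + e + d + 2 = d + e + 1 + (d + 1) by ring, jtpWeight_add_left,
      show 2 * (d + e) - (d + e + d) = e by omega, choose_two_succ]
    ring
  · obtain ⟨t, rfl⟩ : ∃ t, N = m + (t + 1) := ⟨N - m - 1, by omega⟩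
    rcases t with _ | t
    · rw [jtpWeight_add_right, show m + (0 + 1) + 1 = m + 2 + 0 by ring, jtpWeight_add_left,
        show 2 * (m + (0 + 1)) - m = m + 2 by omega, show Nat.choose (0 + 1) 2 = 0 from rfl,
        Nat.choose_zero_succ]
      linear_combination Q ^ (m + 1) * hab
    · rw [jtpWeight_add_right, show m + (t + 1 + 1) + 1 = m + 2 + (t + 1) by ring,
        jtpWeight_add_right, show 2 * (m + (t + 1 + 1)) - m = m + 2 * t + 4 by omega,
        choose_two_succ (t + 1), choose_two_succ t]
      linear_combination Q ^ (m + 3 * t + 3 + t.choose 2) * b ^ (t + 1) * hab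

theorem jtpPoly_succ (hab : a * b = Q) (N : ℕ) :
    jtpPoly Q a b (N + 1) = jtpPoly Q a b N * (Polynomial.C (-(Q ^ N * b)) +
      Polynomial.C (1 + Q ^ (2 * N + 1)) * Polynomial.X +
        Polynomial.C (-(Q ^ N * a)) * Polynomial.X ^ 2) := by
  rw [jtpPoly, prod_range_succ, ← jtpPoly]
  congr 1
  simp only [map_neg, map_add, map_one, map_mul, map_pow, ← hab]
  ring

theorem eval_one_jtpPoly (Q a b : A) (N : ℕ) :
    (jtpPoly Q a b N).eval 1 = ∏ i ∈ range N, (1 - Q ^ i * a) * (1 - Q ^ i * b) := by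
  simp [jtpPoly, Polynomial.eval_prod]

theorem sum_range_mul_coeff_eq_eval_one_derivative {p : Polynomial A} {n : ℕ}
    (hp : p.natDegree < n) :
    ∑ m ∈ range n, (m : A) * p.coeff m = (Polynomial.derivative p).eval 1 := by
  rw [Polynomial.derivative_eval, Polynomial.sum_over_range' _ (by simp) n hp]
  simp [mul_comm]

theorem coeff_mul_quadratic_zero (p : Polynomial A) (α β γ : A) :
    (p * (Polynomial.C α + Polynomial.C β * Polynomial.X +
      Polynomial.C γ * Polynomial.X ^ 2)).coeff 0 = α * p.coeff 0 := by
  simp only [mul_add, ← mul_assoc, Polynomial.coeff_add, Polynomial.coeff_mul_X_zero,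
    Polynomial.coeff_mul_C, Polynomial.coeff_mul_X_pow']
  simp [mul_comm]

theorem coeff_mul_quadratic_one (p : Polynomial A) (α β γ : A) :
    (p * (Polynomial.C α + Polynomial.C β * Polynomial.X +
      Polynomial.C γ * Polynomial.X ^ 2)).coeff 1 = α * p.coeff 1 + β * p.coeff 0 := by
  simp only [mul_add, ← mul_assoc, Polynomial.coeff_add, Polynomial.coeff_mul_X,
    Polynomial.coeff_mul_C, Polynomial.coeff_mul_X_pow']
  simp [mul_comm]

theorem coeff_mul_quadratic_add_two (p : Polynomial A) (α β γ : A) (m : ℕ) :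
    (p * (Polynomial.C α + Polynomial.C β * Polynomial.X +
      Polynomial.C γ * Polynomial.X ^ 2)).coeff (m + 2) =
        α * p.coeff (m + 2) + β * p.coeff (m + 1) + γ * p.coeff m := by
  simp only [mul_add, ← mul_assoc, Polynomial.coeff_add, Polynomial.coeff_mul_X,
    Polynomial.coeff_mul_C, Polynomial.coeff_mul_X_pow]
  ring

theorem coeff_jtpPoly {Q a b : R⟦X⟧} (hQ : constantCoeff Q = 0) (hab : a * b = Q) (N m : ℕ) :
    (jtpPoly Q a b N).coeff m =
      (-1) ^ (N + m) * gaussBinom Q (2 * N) m * jtpWeight Q a b N m := by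
  induction N generalizing m with
  | zero =>
    rcases m with _ | m
    · simp [jtpPoly, jtpWeight]
    · simp [jtpPoly, gaussBinom_eq_zero_of_lt, Polynomial.coeff_one]
  | succ N ih =>
    rw [jtpPoly_succ hab, show 2 * (N + 1) = 2 * N + 2 by ring]
    rcases m with _ | _ | m
    · have e1 := pow_mul_b_mul_jtpWeight hab N 0
      rw [coeff_mul_quadratic_zero, ih]
      simp only [pow_zero, one_mul, add_zero, gaussBinom_zero_right, mul_one, neg_mul] at e1 ⊢
      linear_combination (-(-1) ^ N) * e1
    · have e1 := pow_mul_b_mul_jtpWeight hab N 1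
      have e2 := jtpWeight_succ_succ (Q := Q) (a := a) (b := b) N 0
      rw [coeff_mul_quadratic_one, ih, ih, gaussBinom_add_two_one hQ]
      simp only [pow_one, zero_add, neg_mul, add_zero, gaussBinom_zero_right, mul_one] at e1 e2 ⊢
      linear_combination (-1) ^ N * gaussBinom Q (2 * N) 1 * e1 -
        (-1) ^ N * (1 + Q ^ (2 * N + 1)) * e2
    rw [coeff_mul_quadratic_add_two, ih, ih, ih]
    rcases le_or_gt m (2 * N) with hm | hm
    · have e1 := pow_mul_b_mul_jtpWeight hab N (m + 2)
      have e2 := jtpWeight_succ_succ (Q := Q) (a := a) (b := b) N (m + 1)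
      have e3 := pow_mul_a_mul_jtpWeight hab hm
      rw [gaussBinom_add_two_add_two hQ hm]
      linear_combination (-(-1) ^ (N + m)) * gaussBinom Q (2 * N) (m + 2) * e1 -
        (-1) ^ (N + m + 1) * (1 + Q ^ (2 * N + 1)) * gaussBinom Q (2 * N) (m + 1) * e2 -
        (-1) ^ (N + m) * gaussBinom Q (2 * N) m * e3
    · simp [gaussBinom_eq_zero_of_lt Q hm, gaussBinom_eq_zero_of_lt Q (by omega : 2 * N < m + 1),
        gaussBinom_eq_zero_of_lt Q (by omega : 2 * N < m + 2),
        gaussBinom_eq_zero_of_lt Q (by omega : 2 * N + 2 < m + 2)]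

theorem natDegree_jtpPoly_lt {Q a b : R⟦X⟧} (hQ : constantCoeff Q = 0) (hab : a * b = Q)
    (N : ℕ) : (jtpPoly Q a b N).natDegree < 2 * N + 1 :=
  Nat.lt_succ_of_le <| Polynomial.natDegree_le_iff_coeff_eq_zero.mpr fun m hm => by
    rw [coeff_jtpPoly hQ hab, gaussBinom_eq_zero_of_lt _ hm, mul_zero, zero_mul]

theorem sum_gaussBinom_mul_jtpWeight {Q a b : R⟦X⟧} (hQ : constantCoeff Q = 0)
    (hab : a * b = Q) (N : ℕ) :
    ∑ m ∈ range (2 * N + 1), (-1) ^ (N + m) * gaussBinom Q (2 * N) m * jtpWeight Q a b N m =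
      ∏ i ∈ range N, (1 - Q ^ i * a) * (1 - Q ^ i * b) := by
  rw [← eval_one_jtpPoly, Polynomial.eval_eq_sum_range' (natDegree_jtpPoly_lt hQ hab N)]
  simp [coeff_jtpPoly hQ hab]

theorem eval_one_derivative_jtpPoly_X (N : ℕ) :
    (Polynomial.derivative (jtpPoly (X : R⟦X⟧) X 1 (N + 1))).eval 1 =
      qPochhammer X (N + 1) * qPochhammer X N := by
  have hsplit : jtpPoly (X : R⟦X⟧) X 1 (N + 1) =
      ((∏ i ∈ range N, (1 - Polynomial.C (X ^ (i + 1) * X) * Polynomial.X) *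
        (Polynomial.X - Polynomial.C (X ^ (i + 1) * 1))) *
          (1 - Polynomial.C X * Polynomial.X)) * (Polynomial.X - 1) := by
    simp [jtpPoly, prod_range_succ', mul_assoc]
  rw [hsplit, Polynomial.derivative_mul]
  simp only [Polynomial.eval_add, Polynomial.eval_mul, Polynomial.eval_prod, Polynomial.eval_sub,
    Polynomial.eval_one, Polynomial.eval_C, Polynomial.eval_X, Polynomial.derivative_sub,
    Polynomial.derivative_X, Polynomial.derivative_one, sub_self, sub_zero, mul_zero,
    mul_one, qPochhammer, prod_range_succ' _ N, prod_mul_distrib, ← pow_succ]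
  ring

end JacobiTripleProduct

section ThetaSeries

/-- The series `∑_{k ∈ ℤ} w k q^(e k)`, meant for `e` with finite fibres (an infinite fibre
gives the junk value `0` of `finsum`). -/
def thetaSeries (w : ℤ → ℤ) (e : ℤ → ℕ) : ℤ⟦X⟧ :=
  mk fun n => ∑ᶠ (k : ℤ) (_ : e k = n), w k

theorem sum_smodEq_thetaSeries {w : ℤ → ℤ} {e : ℤ → ℕ} {N r : ℕ}
    (h : ∀ k, e k < r → k.natAbs ≤ N) :
    ∑ m ∈ range (2 * N + 1), C (w (m - N)) * X ^ e (m - N) ≡ thetaSeries w e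
      [SMOD Ideal.span {(X : ℤ⟦X⟧) ^ r}] := by
  refine smodEq_X_pow_iff.mpr fun i hi => ?_
  set t := (range (2 * N + 1)).image (fun m : ℕ => (m : ℤ) - N)
  have ht : ∀ k, e k = i → k ∈ t := fun k hk => by
    have := h k (hk ▸ hi)
    exact mem_image.mpr ⟨(k + N).toNat, mem_range.mpr (by omega), by omega⟩
  rw [thetaSeries, coeff_mk, finsum_cond_eq_sum_of_cond_iff _ (t := t.filter (e · = i))
    fun {k} _ => by simpa using fun hk => ht k hk, sum_filter,
    sum_image (fun _ _ _ _ h => by simpa using h), map_sum]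
  exact sum_congr rfl fun m _ => by rw [coeff_C_mul_X_pow]; exact if_congr eq_comm rfl rfl

theorem exists_eq_of_coeff_thetaSeries_ne_zero {w : ℤ → ℤ} {e : ℤ → ℕ} {n : ℕ}
    (h : coeff n (thetaSeries w e) ≠ 0) : ∃ k, e k = n := by
  contrapose! h
  simp [thetaSeries, h]

theorem coeff_thetaSeries_eq_of_bijOn {w w' : ℤ → ℤ} {e e' : ℤ → ℕ} {n n' : ℕ}
    (g : ℤ → ℤ) (hg : Set.BijOn g {k | e k = n} {k | e' k = n'})
    (hw : ∀ k, e k = n → w k = w' (g k)) :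
    coeff n (thetaSeries w e) = coeff n' (thetaSeries w' e') := by
  rw [thetaSeries, thetaSeries, coeff_mk, coeff_mk]
  exact finsum_mem_eq_of_bijOn g hg hw

end ThetaSeries

section Triangle

def triangle (k : ℤ) : ℕ := (k * (k + 1) / 2).toNat

theorem two_mul_triangle (k : ℤ) : 2 * (triangle k : ℤ) = k * (k + 1) := by
  obtain ⟨j, hj⟩ := Int.even_mul_succ_self k
  have : 0 ≤ k * (k + 1) := by nlinarith [sq_nonneg (2 * k + 1)]
  simp only [triangle, hj]
  omega

theorem triangle_eq_iff {k : ℤ} {t : ℕ} : triangle k = t ↔ k * (k + 1) = 2 * t := by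
  rw [← two_mul_triangle]
  omega

theorem natAbs_le_triangle_add_one (k : ℤ) : k.natAbs ≤ triangle k + 1 := by
  suffices (k.natAbs : ℤ) ≤ triangle k + 1 by omega
  have h := two_mul_triangle k
  rcases le_total 0 k with hk | hk
  · rw [show (k.natAbs : ℤ) = k by omega]
    nlinarith
  · rw [show (k.natAbs : ℤ) = -k by omega]
    nlinarith

theorem triangle_neg_one_sub (k : ℤ) : triangle (-1 - k) = triangle k := by
  rw [triangle_eq_iff, two_mul_triangle]
  ring

theorem triangle_five_mul_add_two (k : ℤ) : triangle (5 * k + 2) = 25 * triangle k + 3 := by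
  rw [triangle_eq_iff]
  push_cast
  linear_combination (-25) * two_mul_triangle k

theorem finite_setOf_triangle_eq (v : ℕ) : {k | triangle k = v}.Finite :=
  (Set.finite_Icc (-(v + 1 : ℤ)) (v + 1)).subset fun k hk => by
    have := natAbs_le_triangle_add_one k
    simp only [Set.mem_ofPred_eq] at hk
    simp only [Set.mem_Icc]
    omega

end Triangle

section GaussJacobi

-- `(Q; Q)_N [2N, m]_Q = (Q; Q)_N (Q; Q)_{2N} / ((Q; Q)_m (Q; Q)_{2N-m})`, and for `Q = X^c`
-- all four symbols agree with the unit `(Q; Q)_g`, `g = min m (2N - m)`, modulo `X^(c (g + 1))`.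
theorem qPochhammer_mul_gaussBinom_smodEq {c N m : ℕ} (hc : 0 < c) (hm : m ≤ 2 * N) :
    qPochhammer ((X : R⟦X⟧) ^ c) N * gaussBinom (X ^ c) (2 * N) m ≡ 1
      [SMOD Ideal.span {(X : R⟦X⟧) ^ (c * (min m (2 * N - m) + 1))}] := by
  set g := min m (2 * N - m)
  rw [SModEq.idealQuotientMk]
  set π := Ideal.Quotient.mk (Ideal.span {(X : R⟦X⟧) ^ (c * (g + 1))})
  have stab : ∀ j, g ≤ j → π (qPochhammer (X ^ c) j) = π (qPochhammer (X ^ c) g) :=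
    fun j hj => SModEq.idealQuotientMk.mp (qPochhammer_X_pow_smodEq le_rfl hj)
  have hprod := congrArg π (gaussBinom_mul_qPochhammer ((X : R⟦X⟧) ^ c) hm)
  simp only [map_mul] at hprod ⊢
  rw [stab m (by omega), stab (2 * N - m) (by omega), stab (2 * N) (by omega)] at hprod
  rw [stab N (by omega), map_one]
  have hG : IsUnit (π (qPochhammer (X ^ c) g)) :=
    (isUnit_qPochhammer (by simp [hc.ne']) g).map π
  exact hG.mul_left_cancel (by linear_combination hprod)

theorem sum_mul_qPochhammer_mul_gaussBinom_smodEq {c N r : ℕ} (hc : 0 < c) (w : ℕ → R⟦X⟧)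
    (e : ℕ → ℕ) (he : ∀ m ≤ 2 * N, r ≤ e m + c * (min m (2 * N - m) + 1)) :
    ∑ m ∈ range (2 * N + 1),
        w m * X ^ e m * (qPochhammer (X ^ c) N * gaussBinom (X ^ c) (2 * N) m) ≡
      ∑ m ∈ range (2 * N + 1), w m * X ^ e m [SMOD Ideal.span {(X : R⟦X⟧) ^ r}] := by
  refine SModEq.sum fun m hm => ?_
  have hm : m ≤ 2 * N := Nat.lt_succ_iff.mp (mem_range.mp hm)
  have h := ((qPochhammer_mul_gaussBinom_smodEq (R := R) hc hm).X_pow_mul (e m)).mono_X_pow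
    (he m hm)
  simpa [mul_assoc] using (SModEq.refl (w m)).mul h

theorem jtpWeight_X_sq (N m : ℕ) :
    jtpWeight ((X : R⟦X⟧) ^ 2) X X N m = X ^ (((m : ℤ) - N).natAbs ^ 2) := by
  rcases le_total N m with h | h
  · obtain ⟨d, rfl⟩ := Nat.exists_eq_add_of_le h
    rw [jtpWeight_add_left, ← pow_mul, ← pow_add,
      show (((N + d : ℕ) : ℤ) - N).natAbs = d by omega, ← two_mul_choose_two_add_self]
  · obtain ⟨d, rfl⟩ := Nat.exists_eq_add_of_le h
    rw [jtpWeight_add_right, ← pow_mul, ← pow_add,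
      show ((m : ℤ) - (m + d : ℕ)).natAbs = d by omega, ← two_mul_choose_two_add_self]

theorem jtpWeight_X_one (N m : ℕ) :
    jtpWeight (X : R⟦X⟧) X 1 N m = X ^ triangle ((m : ℤ) - N) := by
  rcases le_total N m with h | h
  · obtain ⟨d, rfl⟩ := Nat.exists_eq_add_of_le h
    rw [jtpWeight_add_left, ← pow_add]
    congr 1
    symm
    rw [triangle_eq_iff]
    have := two_mul_choose_two_add_self d
    push_cast
    nlinarith
  · obtain ⟨d, rfl⟩ := Nat.exists_eq_add_of_le h
    rw [jtpWeight_add_right, one_pow, mul_one]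
    congr 1
    symm
    rw [triangle_eq_iff]
    have := two_mul_choose_two_add_self d
    push_cast
    nlinarith

def theta : ℤ⟦X⟧ := thetaSeries (fun k => k.negOnePow) (fun k => k.natAbs ^ 2)

/-- `∑_{k ∈ ℤ} (-1)^k k q^(k(k+1)/2)`, that is, `∑_{k ≥ 0} (-1)^k (2k+1) q^(k(k+1)/2)`. -/
def jacobiSeries : ℤ⟦X⟧ := thetaSeries (fun k => k * k.negOnePow) triangle

theorem neg_one_pow_eq_C_negOnePow (N m : ℕ) :
    (-1 : ℤ⟦X⟧) ^ (N + m) = C ((((m : ℤ) - N).negOnePow : ℤˣ) : ℤ) := by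
  rw [Int.negOnePow_eq_iff _ ((N + m : ℕ) : ℤ) |>.mpr ⟨-N, by push_cast; ring⟩,
    Int.coe_negOnePow_natCast]
  simp

theorem finite_gauss_identity (N : ℕ) :
    qPochhammer (X : ℤ⟦X⟧) (2 * N) ^ 2 = qPochhammer (X ^ 2) N *
      ∑ m ∈ range (2 * N + 1), C ((((m : ℤ) - N).negOnePow : ℤˣ) : ℤ) *
        X ^ (((m : ℤ) - N).natAbs ^ 2) *
          (qPochhammer (X ^ 2) N * gaussBinom (X ^ 2) (2 * N) m) := by
  rw [qPochhammer_X_two_mul, mul_pow, sq (∏ i ∈ _, _), ← prod_mul_distrib,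
    ← sum_gaussBinom_mul_jtpWeight (by simp) (sq X).symm, mul_sum, mul_sum]
  refine sum_congr rfl fun m _ => ?_
  rw [jtpWeight_X_sq, neg_one_pow_eq_C_negOnePow]
  ring

theorem finite_jacobi_identity (n : ℕ) :
    qPochhammer (X : ℤ⟦X⟧) (n + 1) * (qPochhammer X (n + 1) * qPochhammer X n) =
      ∑ m ∈ range (2 * (n + 1) + 1),
        C (((m : ℤ) - (n + 1 : ℕ)) * (((m : ℤ) - (n + 1 : ℕ)).negOnePow : ℤˣ)) *
          X ^ triangle ((m : ℤ) - (n + 1 : ℕ)) *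
            (qPochhammer X (n + 1) * gaussBinom X (2 * (n + 1)) m) := by
  set N := n + 1
  set P := jtpPoly (X : ℤ⟦X⟧) X 1 N
  -- the factor `z - 1` of `P` makes `∑ m, P.coeff m = P.eval 1` vanish
  have hzero : ∑ m ∈ range (2 * N + 1), P.coeff m = 0 := by
    have h := sum_gaussBinom_mul_jtpWeight (Q := (X : ℤ⟦X⟧)) (a := X) (b := 1) (by simp)
      (mul_one X) N
    rw [prod_eq_zero (i := 0) (by simp [N]) (by simp)] at h
    rw [← h]
    exact sum_congr rfl fun m _ => coeff_jtpPoly (by simp) (mul_one X) N m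
  rw [← eval_one_derivative_jtpPoly_X, ← sum_range_mul_coeff_eq_eval_one_derivative
    (natDegree_jtpPoly_lt (by simp) (mul_one X) _), mul_sum]
  calc _ = ∑ m ∈ range (2 * N + 1),
          (qPochhammer X N * (((m : ℤ⟦X⟧) - (N : ℤ⟦X⟧)) * P.coeff m) +
            qPochhammer X N * (N : ℤ⟦X⟧) * P.coeff m) :=
        sum_congr rfl fun m _ => by ring
    _ = _ := by
      rw [sum_add_distrib, ← mul_sum _ _ (qPochhammer (X : ℤ⟦X⟧) N * (N : ℤ⟦X⟧)),
        hzero, mul_zero, add_zero]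
      refine sum_congr rfl fun m _ => ?_
      rw [coeff_jtpPoly (by simp) (mul_one X), jtpWeight_X_one, neg_one_pow_eq_C_negOnePow]
      simp only [map_mul, map_sub, map_natCast]
      ring

theorem f_one_sq : f 1 ^ 2 = f 2 * theta := by
  refine eq_of_forall_smodEq_X_pow fun r => ?_
  set N := r + 1 with hN
  have h1 : f 1 ≡ qPochhammer X (2 * N) [SMOD Ideal.span {(X : ℤ⟦X⟧) ^ r}] := by
    simpa using f_smodEq_qPochhammer (k := 1) (m := 2 * N) one_pos (by omega)
  have h2 : f 2 ≡ qPochhammer (X ^ 2) N [SMOD Ideal.span {(X : ℤ⟦X⟧) ^ r}] :=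
    f_smodEq_qPochhammer two_pos (by omega)
  have bound : ∀ m ≤ 2 * N, r ≤ ((m : ℤ) - N).natAbs ^ 2 + 2 * (min m (2 * N - m) + 1) := by
    intro m hm
    have : min m (2 * N - m) + ((m : ℤ) - N).natAbs = N := by omega
    nlinarith
  refine (h1.pow 2).trans ?_
  rw [finite_gauss_identity]
  refine ((SModEq.refl _).mul (sum_mul_qPochhammer_mul_gaussBinom_smodEq two_pos
    (fun m => C ((((m : ℤ) - N).negOnePow : ℤˣ) : ℤ)) (fun m => ((m : ℤ) - N).natAbs ^ 2)
    bound)).trans ?_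
  refine h2.symm.mul (sum_smodEq_thetaSeries (w := fun k => k.negOnePow)
    (e := fun k => k.natAbs ^ 2) fun k hk => ?_)
  nlinarith [Nat.le_self_pow two_ne_zero k.natAbs]

theorem f_one_pow_three : f 1 ^ 3 = jacobiSeries := by
  refine eq_of_forall_smodEq_X_pow fun r => ?_
  set N := r + 1 with hN
  have h1 : f 1 ≡ qPochhammer X N [SMOD Ideal.span {(X : ℤ⟦X⟧) ^ r}] := by
    simpa using f_smodEq_qPochhammer (k := 1) (m := N) one_pos (by omega)
  have h1' : f 1 ≡ qPochhammer X r [SMOD Ideal.span {(X : ℤ⟦X⟧) ^ r}] := by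
    simpa using f_smodEq_qPochhammer (k := 1) (m := r) one_pos (by omega)
  have bound : ∀ m ≤ 2 * N, r ≤ triangle ((m : ℤ) - N) + 1 * (min m (2 * N - m) + 1) := by
    intro m hm
    have := natAbs_le_triangle_add_one ((m : ℤ) - N)
    omega
  have htrunc := sum_mul_qPochhammer_mul_gaussBinom_smodEq one_pos
    (fun m => C (((m : ℤ) - N) * (((m : ℤ) - N).negOnePow : ℤˣ)))
    (fun m => triangle ((m : ℤ) - N)) bound
  simp only [pow_one] at htrunc
  refine (show f 1 ^ 3 = f 1 * (f 1 * f 1) by ring) ▸ (h1.mul (h1.mul h1')).trans ?_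
  rw [finite_jacobi_identity]
  refine htrunc.trans (sum_smodEq_thetaSeries (w := fun k => k * k.negOnePow) (e := triangle)
    fun k hk => ?_)
  have := natAbs_le_triangle_add_one k
  omega

end GaussJacobi

section Dissection

theorem coeff_mul_expand {p r : ℕ} (hp : p ≠ 0) (hr : r < p) (A B : R⟦X⟧) (n : ℕ) :
    coeff (p * n + r) (A * expand p hp B) = coeff n (mk (fun t => coeff (p * t + r) A) * B) := by
  set F : ℕ × ℕ → R := fun y => coeff y.1 A * coeff y.2 (expand p hp B)
  set g : ℕ × ℕ → ℕ × ℕ := fun x => (p * x.1 + r, p * x.2)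
  have hg : Set.InjOn g (antidiagonal n) := fun x _ y _ h => by
    simp only [g, Prod.mk.injEq] at h
    exact Prod.ext (by nlinarith [Nat.pos_of_ne_zero hp]) (by nlinarith [Nat.pos_of_ne_zero hp])
  rw [coeff_mul, coeff_mul]
  symm
  calc ∑ x ∈ antidiagonal n, coeff x.1 (mk fun t => coeff (p * t + r) A) * coeff x.2 B
      = ∑ x ∈ antidiagonal n, F (g x) := by simp [F, g, coeff_expand_mul]
    _ = ∑ y ∈ (antidiagonal n).image g, F y := (sum_image hg).symm
    _ = ∑ y ∈ antidiagonal (p * n + r), F y := by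
        refine sum_subset (fun y hy => ?_) fun y hy hyg => ?_
        · obtain ⟨x, hx, rfl⟩ := mem_image.mp hy
          rw [HasAntidiagonal.mem_antidiagonal] at hx ⊢
          simp only [g, ← hx]
          ring
        · rw [HasAntidiagonal.mem_antidiagonal] at hy
          by_cases hdvd : p ∣ y.2
          · obtain ⟨b, hb⟩ := hdvd
            have hbn : b ≤ n := by
              by_contra hbn
              nlinarith
            refine absurd (mem_image.mpr ⟨(n - b, b), HasAntidiagonal.mem_antidiagonal.mpr
              (by omega), Prod.ext ?_ hb.symm⟩) hyg
            have : p * b ≤ p * n := Nat.mul_le_mul_left p hbn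
            simp only [g, Nat.mul_sub]
            omega
          · simp [F, coeff_expand_of_not_dvd _ _ _ hdvd]

theorem five_dvd_sub_two_of_triangle_eq {k : ℤ} {v : ℕ} (h : triangle k = 25 * v + 3) :
    5 ∣ k - 2 := by
  have h2 := triangle_eq_iff.mp h
  refine (ZMod.intCast_zmod_eq_zero_iff_dvd (k - 2) 5).mp ?_
  have := congrArg (Int.cast : ℤ → ZMod 5) h2
  push_cast at this ⊢
  generalize (k : ZMod 5) = x at this ⊢
  generalize (v : ZMod 5) = y at this
  revert x y
  decide

theorem five_dvd_of_sq_add_triangle {s k : ℤ} {t : ℕ}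
    (h : s.natAbs ^ 2 + triangle k = 5 * t + 3) : 5 ∣ s ∧ 5 ∣ k - 2 := by
  have h' : (s.natAbs ^ 2 : ℤ) + triangle k = 5 * t + 3 := by exact_mod_cast h
  have h2 : 2 * s ^ 2 + k * (k + 1) = 10 * t + 6 := by
    linear_combination 2 * h' - 2 * Int.natAbs_sq s - two_mul_triangle k
  -- modulo 5, `2 s²` lies in `{0, 2, 3}` and `k (k + 1)` in `{0, 1, 2}`
  have key : ((s : ℤ) : ZMod 5) = 0 ∧ ((k - 2 : ℤ) : ZMod 5) = 0 := by
    have := congrArg (Int.cast : ℤ → ZMod 5) h2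
    push_cast at this ⊢
    generalize (s : ZMod 5) = x at this ⊢
    generalize (k : ZMod 5) = y at this ⊢
    generalize (t : ZMod 5) = z at this
    revert x y z
    decide
  exact ⟨(ZMod.intCast_zmod_eq_zero_iff_dvd s 5).mp key.1,
    (ZMod.intCast_zmod_eq_zero_iff_dvd (k - 2) 5).mp key.2⟩

theorem coeff_theta_twentyFive_mul (u : ℕ) : coeff (25 * u) theta = coeff u theta := by
  symm
  refine coeff_thetaSeries_eq_of_bijOn (fun k => 5 * k) ⟨fun k hk => ?_, fun a _ b _ h => ?_,
    fun k hk => ?_⟩ fun k _ => ?_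
  · simp only [Set.mem_ofPred_eq] at hk ⊢
    rw [Int.natAbs_mul, ← hk]
    ring
  · simpa using h
  · simp only [Set.mem_ofPred_eq] at hk
    have h5 : (5 : ℤ) ∣ k := Int.ofNat_dvd_left.mpr
      (Nat.prime_five.dvd_of_dvd_pow (n := 2) ⟨5 * u, by rw [hk]; ring⟩)
    obtain ⟨j, rfl⟩ := h5
    refine ⟨j, ?_, rfl⟩
    have : 25 * j.natAbs ^ 2 = 25 * u := by rw [← hk, Int.natAbs_mul, mul_pow]; rfl
    show j.natAbs ^ 2 = u
    omega
  · congr 1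
    exact Int.negOnePow_eq_iff _ _ |>.mpr ⟨-2 * k, by ring⟩

theorem finsum_negOnePow_triangle_eq_zero (v : ℕ) :
    ∑ᶠ k ∈ {k : ℤ | triangle k = v}, (k.negOnePow : ℤ) = 0 := by
  have hmaps : Set.MapsTo (fun k : ℤ => -1 - k) {k | triangle k = v} {k | triangle k = v} :=
    fun k hk => (triangle_neg_one_sub k).trans hk
  have h := finsum_mem_eq_of_bijOn (f := fun k : ℤ => (k.negOnePow : ℤ))
    (g := fun k => -(k.negOnePow : ℤ)) _
    ⟨hmaps, fun a _ b _ h => by simpa using h, fun k hk => ⟨-1 - k, hmaps hk, by ring⟩⟩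
    fun k _ => by simp [Int.negOnePow_sub]
  rw [finsum_mem_neg_distrib _ (finite_setOf_triangle_eq v)] at h
  linarith

theorem coeff_jacobi_twentyFive_mul_add_three (v : ℕ) :
    coeff (25 * v + 3) jacobiSeries = 5 * coeff v jacobiSeries := by
  have hbij : coeff v (thetaSeries (fun k => (5 * k + 2) * k.negOnePow) triangle) =
      coeff (25 * v + 3) jacobiSeries := by
    refine coeff_thetaSeries_eq_of_bijOn (fun k => 5 * k + 2) ⟨fun k hk => ?_,
      fun a _ b _ h => ?_, fun k hk => ?_⟩ fun k _ => ?_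
    · exact (triangle_five_mul_add_two k).trans (by rw [hk])
    · simpa using h
    · obtain ⟨j, hj⟩ := five_dvd_sub_two_of_triangle_eq hk
      refine ⟨j, ?_, show 5 * j + 2 = k by omega⟩
      have hk' : triangle (5 * j + 2) = 25 * v + 3 := by
        rw [show 5 * j + 2 = k by omega]
        exact hk
      rw [triangle_five_mul_add_two] at hk'
      show triangle j = v
      omega
    · congr 2
      exact Int.negOnePow_eq_iff _ _ |>.mpr ⟨-2 * k - 1, by ring⟩
  calc coeff (25 * v + 3) jacobiSeries
      = ∑ᶠ k ∈ {k : ℤ | triangle k = v},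
          (5 * (k * k.negOnePow) + 2 * (k.negOnePow : ℤ)) := by
        rw [← hbij, thetaSeries, coeff_mk]
        exact finsum_congr fun k => finsum_congr fun _ => by ring
    _ = 5 * coeff v jacobiSeries := by
        rw [finsum_mem_add_distrib (finite_setOf_triangle_eq v), ← mul_finsum_mem,
          ← mul_finsum_mem, finsum_negOnePow_triangle_eq_zero, mul_zero, add_zero, jacobiSeries,
          thetaSeries, coeff_mk]
        rfl

theorem coeff_theta_mul_coeff_jacobi {i j t : ℕ} (h : i + j = 5 * t + 3) :
    coeff i theta * coeff j jacobiSeries =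
      coeff i (expand 25 (by norm_num) theta) *
        coeff j (C 5 * X ^ 3 * expand 25 (by norm_num) jacobiSeries) := by
  rw [mul_assoc, coeff_C_mul, coeff_X_pow_mul']
  by_cases hij : i % 25 = 0 ∧ j % 25 = 3
  · obtain ⟨u, rfl⟩ : ∃ u, i = 25 * u := ⟨i / 25, by omega⟩
    obtain ⟨v, rfl⟩ : ∃ v, j = 25 * v + 3 := ⟨j / 25, by omega⟩
    rw [if_pos (by omega), Nat.add_sub_cancel, coeff_expand_mul, coeff_expand_mul,
      coeff_theta_twentyFive_mul, coeff_jacobi_twentyFive_mul_add_three]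
  · have hlhs : coeff i theta * coeff j jacobiSeries = 0 := by
      by_contra hne
      obtain ⟨s, rfl⟩ := exists_eq_of_coeff_thetaSeries_ne_zero (left_ne_zero_of_mul hne)
      obtain ⟨k, rfl⟩ := exists_eq_of_coeff_thetaSeries_ne_zero (right_ne_zero_of_mul hne)
      obtain ⟨⟨a, rfl⟩, ⟨b, hb⟩⟩ := five_dvd_of_sq_add_triangle h
      rw [show k = 5 * b + 2 by omega, triangle_five_mul_add_two] at hij
      simp [Int.natAbs_mul, mul_pow] at hij
    rw [hlhs, eq_comm]
    rcases not_and_or.mp hij with hi | hj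
    · rw [coeff_expand_of_not_dvd 25 _ theta (show ¬ 25 ∣ i by omega), zero_mul]
    · split_ifs
      · rw [coeff_expand_of_not_dvd 25 _ jacobiSeries (show ¬ 25 ∣ j - 3 by omega), mul_zero,
          mul_zero]
      · rw [mul_zero, mul_zero]

theorem coeff_five_mul_add_three_theta_mul_jacobi (t : ℕ) :
    coeff (5 * t + 3) (theta * jacobiSeries) =
      5 * coeff t (expand 5 (by norm_num) (theta * jacobiSeries)) := by
  calc coeff (5 * t + 3) (theta * jacobiSeries)
      = coeff (5 * t + 3) (expand 25 (by norm_num) theta *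
          (C 5 * X ^ 3 * expand 25 (by norm_num) jacobiSeries)) := by
        rw [coeff_mul, coeff_mul]
        exact sum_congr rfl fun x hx =>
          coeff_theta_mul_coeff_jacobi (HasAntidiagonal.mem_antidiagonal.mp hx)
    _ = 5 * coeff (5 * t) (expand 25 (by norm_num) (theta * jacobiSeries)) := by
        rw [map_mul (expand 25 _),
          show ∀ a b : ℤ⟦X⟧, a * (C 5 * X ^ 3 * b) = C 5 * (X ^ 3 * (a * b)) by
            intros; ring,
          coeff_C_mul, coeff_X_pow_mul]
    _ = 5 * coeff t (expand 5 (by norm_num) (theta * jacobiSeries)) := by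
        rw [show expand 25 _ (theta * jacobiSeries) = _ from
          expand_mul 5 (by norm_num) 5 (by norm_num) _, coeff_expand_mul]

end Dissection

end

theorem stmt13 : ∀ n : ℕ, PowerSeries.coeff (5 * n + 3) (f 1 ^ 5 * f 10 ^ 5 * finv 2 * finv 5) = 5 * PowerSeries.coeff n (f 2 ^ 5 * f 5 ^ 5 * finv 1 * finv 10) := by
  intro n
  have hD : f 1 ^ 5 * finv 2 = theta * jacobiSeries := by
    rw [show f 1 ^ 5 = f 1 ^ 2 * f 1 ^ 3 by ring, f_one_sq, f_one_pow_three]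
    linear_combination theta * jacobiSeries * f_mul_finv two_pos
  have hW : expand 5 (by norm_num) (f 2 ^ 5 * finv 1) = f 10 ^ 5 * finv 5 := by
    rw [map_mul, map_pow, expand_f two_pos, expand_finv one_pos]
    rfl
  have hD5 : expand 5 (by norm_num) (theta * jacobiSeries) = f 5 ^ 5 * finv 10 := by
    rw [← hD, map_mul, map_pow, expand_f one_pos, expand_finv two_pos]
    rfl
  have hsection : mk (fun t => coeff (5 * t + 3) (theta * jacobiSeries)) =
      C 5 * expand 5 (by norm_num) (theta * jacobiSeries) :=
    ext fun t => by rw [coeff_mk, coeff_C_mul, coeff_five_mul_add_three_theta_mul_jacobi]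
  calc coeff (5 * n + 3) (f 1 ^ 5 * f 10 ^ 5 * finv 2 * finv 5)
      = coeff (5 * n + 3) (theta * jacobiSeries * expand 5 (by norm_num) (f 2 ^ 5 * finv 1)) := by
        rw [hW, ← hD]
        ring_nf
    _ = 5 * coeff n (f 2 ^ 5 * f 5 ^ 5 * finv 1 * finv 10) := by
        rw [coeff_mul_expand _ (by norm_num), hsection, hD5, ← coeff_C_mul]
        ring_nf
end
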